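/- For a group pair (G,𝒫) the following are equivalent: (1) every P ∈ 𝒫 has finite index in its commensurator comm_G(P) (i.e. (G,𝒫) is reducible); (2) for every coset Q ∈ G/𝒫 the set {R ∈ G/𝒫 : Hdist_G(R,Q) < ∞} is finite; (3) there is a constant N > 0 such that for every Q ∈ G/𝒫 the set {R ∈ G/𝒫 : Hdist_G(R,Q) < ∞} has cardinality at most N. -/

import Mathlib

open scoped Pointwise ENNReal NNReal

namespace CIC

variable {G : Type*} [Group G] {H : Type*} [Group H]

/-- Word length of `g` with respect to the generating set `S`: the least `n` such that `g`
is a product of `n` elements of `S ∪ S⁻¹`. -/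
noncomputable def wordLength (S : Set G) (g : G) : ℕ :=
  sInf {n | ∃ l : List G, (∀ x ∈ l, x ∈ S ∨ x⁻¹ ∈ S) ∧ l.length = n ∧ l.prod = g}

/-- The word metric on `G` associated to the generating set `S`. -/
noncomputable def wdist (S : Set G) (g h : G) : ℕ := wordLength S (g⁻¹ * h)

/-- Closed `r`-neighborhood of `A` with respect to the word metric of `S`. -/
def nbhd (S : Set G) (r : ℝ) (A : Set G) : Set G :=
  {x | ∃ a ∈ A, (wdist S a x : ℝ) ≤ r}

/-- Hausdorff distance between subsets of `G`, valued in `[0,∞]`: the infimum of those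
`r ≥ 0` such that each set is contained in the closed `r`-neighborhood of the other,
the infimum of the empty set being `∞`. -/
noncomputable def hdist (S : Set G) (A B : Set G) : ℝ≥0∞ :=
  ⨅ (r : ℝ≥0) (_ : A ⊆ nbhd S (r : ℝ) B ∧ B ⊆ nbhd S (r : ℝ) A), (r : ℝ≥0∞)

/-- The conjugate subgroup `g P g⁻¹`. -/
def conj (g : G) (P : Subgroup G) : Subgroup G := P.map (MulAut.conj g).toMonoidHom

/-- The set `G/𝒫` of all left cosets `gP` with `g ∈ G` and `P ∈ 𝒫`. -/
def cosets (Ps : Finset (Subgroup G)) : Set (Set G) :=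
  {A | ∃ (g : G) (P : Subgroup G), P ∈ Ps ∧ A = g • (P : Set G)}

/-- A group pair `(G, 𝒫)`: `S` is a finite generating set of `G` and `𝒫` is a finite
collection of infinite subgroups of `G`. -/
structure IsGroupPair (S : Finset G) (Ps : Finset (Subgroup G)) : Prop where
  generates : Subgroup.closure (S : Set G) = ⊤
  infinite : ∀ P ∈ Ps, (P : Set G).Infinite

/-- An `(L,C,M)`-quasi-isometry of group pairs `q : (G,𝒫) → (H,𝒬)`. -/
structure IsPairQI (S : Finset G) (T : Finset H)
    (Ps : Finset (Subgroup G)) (Qs : Finset (Subgroup H))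
    (L C M : ℝ≥0) (q : G → H) : Prop where
  one_le : 1 ≤ L
  lower : ∀ a b : G, (wdist (S : Set G) a b : ℝ) / L - C ≤ (wdist (T : Set H) (q a) (q b) : ℝ)
  upper : ∀ a b : G, (wdist (T : Set H) (q a) (q b) : ℝ) ≤ L * (wdist (S : Set G) a b : ℝ) + C
  dense : ∀ y : H, ∃ x : G, (wdist (T : Set H) (q x) y : ℝ) ≤ C
  coset_fwd : ∀ A ∈ cosets Ps, ∃ B ∈ cosets Qs, hdist (T : Set H) (q '' A) B < (M : ℝ≥0∞)
  coset_bwd : ∀ B ∈ cosets Qs, ∃ A ∈ cosets Ps, hdist (T : Set H) (q '' A) B < (M : ℝ≥0∞)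

/-! In a finitely generated group two subgroups are at finite Hausdorff distance iff they are
commensurable; since `g • P` is at bounded distance from `g P g⁻¹`, the coset `g • P` is at finite
distance from `P` iff `g ∈ comm_G(P)`. So if `h₀ • P` is at finite distance from a coset `Q`, the
cosets `h • P` at finite distance from `Q` are exactly the `h₀ c • P` with `c ∈ comm_G(P)`, and
there are `[comm_G(P) : P]` of them. Summing over `𝒫` gives the uniform bound. -/

section WordMetric

variable {S : Set G}

lemma wordLength_prod_le {l : List G} (hl : ∀ x ∈ l, x ∈ S ∨ x⁻¹ ∈ S) :
    wordLength S l.prod ≤ l.length :=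
  Nat.sInf_le ⟨l, hl, rfl, rfl⟩

lemma exists_list_length_eq_wordLength (hS : Subgroup.closure S = ⊤) (g : G) :
    ∃ l : List G, (∀ x ∈ l, x ∈ S ∨ x⁻¹ ∈ S) ∧ l.length = wordLength S g ∧ l.prod = g := by
  have hg : g ∈ Submonoid.closure (S ∪ S⁻¹) := by
    rw [← Subgroup.closure_toSubmonoid, hS]
    trivial
  obtain ⟨w, hw, rfl⟩ := Submonoid.exists_list_of_mem_closure hg
  exact Nat.sInf_mem (s := {n | ∃ l : List G, (∀ x ∈ l, x ∈ S ∨ x⁻¹ ∈ S) ∧ l.length = n ∧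
    l.prod = w.prod}) ⟨w.length, w, hw, rfl, rfl⟩

lemma wordLength_mul_le (hS : Subgroup.closure S = ⊤) (x y : G) :
    wordLength S (x * y) ≤ wordLength S x + wordLength S y := by
  obtain ⟨l₁, h₁, hl₁, rfl⟩ := exists_list_length_eq_wordLength hS x
  obtain ⟨l₂, h₂, hl₂, rfl⟩ := exists_list_length_eq_wordLength hS y
  have h := wordLength_prod_le (S := S) (l := l₁ ++ l₂) fun z hz =>
    (List.mem_append.mp hz).elim (h₁ z) (h₂ z)
  rwa [List.prod_append, List.length_append, hl₁, hl₂] at h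

lemma wdist_triangle (hS : Subgroup.closure S = ⊤) (a b c : G) :
    wdist S a c ≤ wdist S a b + wdist S b c := by
  have h := wordLength_mul_le hS (a⁻¹ * b) (b⁻¹ * c)
  rwa [mul_assoc, mul_inv_cancel_left] at h

lemma wdist_mul_left (g a b : G) : wdist S (g * a) (g * b) = wdist S a b := by
  simp [wdist, mul_assoc]

lemma wdist_self_mul (a k : G) : wdist S a (a * k) = wordLength S k := by
  simp [wdist]

lemma finite_setOf_wordLength_le {S : Finset G} (hS : Subgroup.closure (S : Set G) = ⊤)
    (n : ℕ) : {g : G | wordLength (S : Set G) g ≤ n}.Finite := by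
  set T : Set G := (S : Set G) ∪ (S : Set G)⁻¹
  have : Finite T := (S.finite_toSet.union S.finite_toSet.inv).to_subtype
  refine ((List.finite_length_le T n).image fun l => (l.map Subtype.val).prod).subset ?_
  intro g hg
  obtain ⟨l, hl, hlen, rfl⟩ := exists_list_length_eq_wordLength hS g
  lift l to List T using hl
  refine ⟨l, ?_, rfl⟩
  show l.length ≤ n
  rw [← List.length_map Subtype.val, hlen]
  exact hg

end WordMetric

section Index

lemma relIndex_eq_ncard_image_smul (K C : Subgroup G) :
    K.relIndex C = ((fun c : G => c • (K : Set G)) '' C).ncard := by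
  have hstab : MulAction.stabilizer C (K : Set G) = K.subgroupOf C := by
    ext c
    rw [MulAction.mem_stabilizer_iff, Subgroup.mem_subgroupOf, Subgroup.smul_def,
      ← MulAction.mem_stabilizer_iff, MulAction.stabilizer_subgroup]
  rw [Subgroup.relIndex, ← hstab, MulAction.index_stabilizer]
  congr 1
  ext A
  simp [MulAction.orbit, Subgroup.smul_def]

lemma relIndex_ne_zero_iff_finite_image_smul (K C : Subgroup G) :
    K.relIndex C ≠ 0 ↔ ((fun c : G => c • (K : Set G)) '' C).Finite := by
  rw [relIndex_eq_ncard_image_smul]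
  refine ⟨Set.finite_of_ncard_ne_zero, fun hfin => ((Set.ncard_pos hfin).mpr ?_).ne'⟩
  exact ⟨_, 1, one_mem C, rfl⟩

end Index

section FiniteHausdorffDistance

variable {S : Set G}

lemma nbhd_mono {r s : ℝ} (hrs : r ≤ s) (A : Set G) : nbhd S r A ⊆ nbhd S s A :=
  fun _ ⟨a, ha, hax⟩ => ⟨a, ha, hax.trans hrs⟩

lemma nbhd_smul (g : G) (r : ℝ) (A : Set G) : nbhd S r (g • A) = g • nbhd S r A := by
  ext x
  constructor
  · rintro ⟨_, ⟨a, ha, rfl⟩, hd⟩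
    refine ⟨g⁻¹ * x, ⟨a, ha, ?_⟩, mul_inv_cancel_left g x⟩
    rwa [← wdist_mul_left g, mul_inv_cancel_left]
  · rintro ⟨y, ⟨a, ha, hd⟩, rfl⟩
    exact ⟨g * a, ⟨a, ha, rfl⟩, (wdist_mul_left (S := S) g a y).symm ▸ hd⟩

def HdistFinite (S A B : Set G) : Prop :=
  ∃ r : ℝ≥0, A ⊆ nbhd S r B ∧ B ⊆ nbhd S r A

lemma hdist_lt_top_iff {A B : Set G} : hdist S A B < ⊤ ↔ HdistFinite S A B := by
  simp [hdist, HdistFinite, lt_top_iff_ne_top, iInf_eq_top]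

namespace HdistFinite

lemma symm {A B : Set G} (h : HdistFinite S A B) : HdistFinite S B A :=
  let ⟨r, h₁, h₂⟩ := h
  ⟨r, h₂, h₁⟩

lemma trans (hS : Subgroup.closure S = ⊤) {A B C : Set G}
    (hAB : HdistFinite S A B) (hBC : HdistFinite S B C) : HdistFinite S A C := by
  have key : ∀ {X Y Z : Set G} {u v : ℝ≥0}, X ⊆ nbhd S u Y → Y ⊆ nbhd S v Z →
      X ⊆ nbhd S ((u + v : ℝ≥0) : ℝ) Z := by
    intro X Y Z u v hXY hYZ x hx
    obtain ⟨y, hy, hyx⟩ := hXY hx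
    obtain ⟨z, hz, hzy⟩ := hYZ hy
    refine ⟨z, hz, ?_⟩
    have := wdist_triangle hS z y x
    push_cast
    exact (Nat.cast_le.mpr this).trans (by push_cast; linarith)
  obtain ⟨r, hr₁, hr₂⟩ := hAB
  obtain ⟨s, hs₁, hs₂⟩ := hBC
  exact ⟨r + s, key hr₁ hs₁, add_comm r s ▸ key hs₂ hr₂⟩

lemma smul (g : G) {A B : Set G} (h : HdistFinite S A B) : HdistFinite S (g • A) (g • B) := by
  obtain ⟨r, h₁, h₂⟩ := h
  exact ⟨r, nbhd_smul g r B ▸ Set.smul_set_mono h₁, nbhd_smul g r A ▸ Set.smul_set_mono h₂⟩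

end HdistFinite

lemma hdistFinite_smul_iff (g : G) {A B : Set G} :
    HdistFinite S (g • A) (g • B) ↔ HdistFinite S A B :=
  ⟨fun h => by simpa using h.smul g⁻¹, HdistFinite.smul g⟩

end FiniteHausdorffDistance

section Commensurable

open Subgroup

lemma exists_subset_nbhd_of_relIndex_ne_zero {S : Set G} {P K : Subgroup G}
    (h : K.relIndex P ≠ 0) : ∃ n : ℕ, (P : Set G) ⊆ nbhd S n K := by
  have : Finite (P ⧸ K.subgroupOf P) := Nat.finite_of_card_ne_zero h
  obtain ⟨n, hn⟩ := (Set.finite_range fun q : P ⧸ K.subgroupOf P =>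
    wordLength S ((q.out : P) : G)⁻¹).bddAbove
  refine ⟨n, fun x hx => ?_⟩
  -- `x⁻¹ ∈ d K` for a chosen representative `d`, so `x ∈ K d⁻¹` is within `|d⁻¹|` of `K`
  obtain ⟨k, hk⟩ := QuotientGroup.mk_out_eq_mul (K.subgroupOf P) ⟨x⁻¹, inv_mem hx⟩
  set d := (QuotientGroup.mk (s := K.subgroupOf P) ⟨x⁻¹, inv_mem hx⟩).out
  have hxd : x = (k : G) * (d : G)⁻¹ := by
    rw [hk]
    simp
  refine ⟨(k : G), Subgroup.mem_subgroupOf.mp k.2, ?_⟩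
  rw [hxd, wdist_self_mul]
  exact_mod_cast hn ⟨_, rfl⟩

lemma relIndex_ne_zero_of_subset_nbhd {S : Finset G} (hS : closure (S : Set G) = ⊤)
    {P K : Subgroup G} {r : ℝ} (h : (K : Set G) ⊆ nbhd S r P) : P.relIndex K ≠ 0 := by
  rw [relIndex_ne_zero_iff_finite_image_smul]
  refine ((finite_setOf_wordLength_le hS ⌊r⌋₊).image fun s => s⁻¹ • (P : Set G)).subset ?_
  rintro _ ⟨k, hk, rfl⟩
  obtain ⟨p, hp, hpk⟩ := h (inv_mem hk)
  refine ⟨p⁻¹ * k⁻¹, Nat.le_floor hpk, ?_⟩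
  simp only [mul_inv_rev, inv_inv, mul_smul, smul_coe_set hp]

lemma hdistFinite_iff_commensurable {S : Finset G} (hS : closure (S : Set G) = ⊤)
    (P K : Subgroup G) : HdistFinite S (P : Set G) (K : Set G) ↔ Commensurable P K := by
  refine ⟨fun ⟨r, hPK, hKP⟩ =>
    ⟨relIndex_ne_zero_of_subset_nbhd hS hKP, relIndex_ne_zero_of_subset_nbhd hS hPK⟩,
    fun h => ?_⟩
  obtain ⟨m, hKP⟩ := exists_subset_nbhd_of_relIndex_ne_zero (S := S) h.1
  obtain ⟨n, hPK⟩ := exists_subset_nbhd_of_relIndex_ne_zero (S := S) h.2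
  refine ⟨max m n, hPK.trans (nbhd_mono ?_ _), hKP.trans (nbhd_mono ?_ _)⟩ <;> simp

lemma hdistFinite_smul_conjAct (S : Set G) (g : G) (P : Subgroup G) :
    HdistFinite S (g • (P : Set G)) ((ConjAct.toConjAct g • P : Subgroup G) : Set G) := by
  refine ⟨(wordLength S g + wordLength S g⁻¹ : ℕ), ?_, ?_⟩
  · rintro _ ⟨p, hp, rfl⟩
    refine ⟨g * p * g⁻¹, (mem_smul_pointwise_iff_exists _ _ _).mpr ⟨p, hp, rfl⟩, ?_⟩
    show (wdist S _ (g * p) : ℝ) ≤ _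
    have e := wdist_self_mul (S := S) (g * p * g⁻¹) g
    rw [inv_mul_cancel_right] at e
    rw [e]
    exact_mod_cast Nat.le_add_right _ _
  · intro _ hx
    obtain ⟨p, hp, rfl⟩ := (mem_smul_pointwise_iff_exists _ _ _).mp hx
    refine ⟨g * p, ⟨p, hp, rfl⟩, ?_⟩
    rw [ConjAct.toConjAct_smul, wdist_self_mul]
    exact_mod_cast Nat.le_add_left _ _

lemma hdistFinite_smul_self_iff_mem_commensurator {S : Finset G}
    (hS : closure (S : Set G) = ⊤) (g : G) (P : Subgroup G) :
    HdistFinite S (g • (P : Set G)) P ↔ g ∈ Commensurable.commensurator P := by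
  rw [Commensurable.commensurator_mem_iff, ← hdistFinite_iff_commensurable hS]
  have hconj := hdistFinite_smul_conjAct (S : Set G) g P
  exact ⟨hconj.symm.trans hS, hconj.trans hS⟩

end Commensurable

section Cosets

open Subgroup

variable {S : Finset G}

lemma encard_setOf_smul_hdistFinite_le (hS : closure (S : Set G) = ⊤) {P : Subgroup G}
    (hP : P.relIndex (Commensurable.commensurator P) ≠ 0) (Q : Set G) :
    {R | (∃ h : G, R = h • (P : Set G)) ∧ HdistFinite S R Q}.encard ≤
      P.relIndex (Commensurable.commensurator P) := by
  rcases Set.eq_empty_or_nonempty {R | (∃ h : G, R = h • (P : Set G)) ∧ HdistFinite S R Q}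
    with hempty | ⟨_, ⟨h₀, rfl⟩, hh₀⟩
  · simp [hempty]
  have hsub : {R | (∃ h : G, R = h • (P : Set G)) ∧ HdistFinite S R Q} ⊆
      (h₀ • ·) '' ((fun c : G => c • (P : Set G)) '' Commensurable.commensurator P) := by
    rintro _ ⟨⟨h, rfl⟩, hh⟩
    refine ⟨(h₀⁻¹ * h) • (P : Set G), ⟨h₀⁻¹ * h, ?_, rfl⟩, by simp [smul_smul]⟩
    rw [SetLike.mem_coe, ← hdistFinite_smul_self_iff_mem_commensurator hS,
      ← hdistFinite_smul_iff h₀, smul_smul, mul_inv_cancel_left]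
    exact hh.trans hS hh₀.symm
  rw [relIndex_eq_ncard_image_smul,
    ((relIndex_ne_zero_iff_finite_image_smul _ _).mp hP).cast_ncard_eq]
  exact (Set.encard_le_encard hsub).trans (Set.encard_image_le _ _)

lemma encard_cosets_hdistFinite_le (hS : closure (S : Set G) = ⊤) {Ps : Finset (Subgroup G)}
    (hPs : ∀ P ∈ Ps, P.relIndex (Commensurable.commensurator P) ≠ 0) (Q : Set G) :
    {R | R ∈ cosets Ps ∧ HdistFinite S R Q}.encard ≤
      ∑ P ∈ Ps, P.relIndex (Commensurable.commensurator P) := by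
  calc {R | R ∈ cosets Ps ∧ HdistFinite S R Q}.encard
      ≤ (⋃ P ∈ Ps, {R | (∃ h : G, R = h • (P : Set G)) ∧ HdistFinite S R Q}).encard := by
        refine Set.encard_le_encard ?_
        rintro R ⟨⟨h, P, hP, rfl⟩, hR⟩
        exact Set.mem_iUnion₂.mpr ⟨P, hP, ⟨h, rfl⟩, hR⟩
    _ ≤ ∑ P ∈ Ps, {R | (∃ h : G, R = h • (P : Set G)) ∧ HdistFinite S R Q}.encard :=
        Finset.set_encard_biUnion_le _ _
    _ ≤ _ := by
        push_cast
        exact Finset.sum_le_sum fun P hP => encard_setOf_smul_hdistFinite_le hS (hPs P hP) Q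

lemma relIndex_commensurator_ne_zero (hS : closure (S : Set G) = ⊤)
    {Ps : Finset (Subgroup G)} {P : Subgroup G} (hP : P ∈ Ps)
    (hfin : {R | R ∈ cosets Ps ∧ HdistFinite S R P}.Finite) :
    P.relIndex (Commensurable.commensurator P) ≠ 0 := by
  rw [relIndex_ne_zero_iff_finite_image_smul]
  refine hfin.subset ?_
  rintro _ ⟨c, hc, rfl⟩
  exact ⟨⟨c, P, hP, rfl⟩, (hdistFinite_smul_self_iff_mem_commensurator hS c P).mpr hc⟩

end Cosets

/-- For a group pair `(G,𝒫)`, the following are equivalent: (1) every `P ∈ 𝒫` has finite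
index in its commensurator; (2) for every coset `Q` the set of cosets at finite Hausdorff
distance from `Q` is finite; (3) there is a uniform bound `N` on the cardinality of these
sets. -/
theorem statement3 (S : Finset G) (Ps : Finset (Subgroup G)) (hpair : IsGroupPair S Ps) :
    ((∀ P ∈ Ps, P.relIndex (Subgroup.Commensurable.commensurator P) ≠ 0) ↔
      (∀ Q ∈ cosets Ps, {R | R ∈ cosets Ps ∧ hdist (S : Set G) R Q < ⊤}.Finite)) ∧
    ((∀ P ∈ Ps, P.relIndex (Subgroup.Commensurable.commensurator P) ≠ 0) ↔
      (∃ N : ℕ, 0 < N ∧ ∀ Q ∈ cosets Ps,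
        {R | R ∈ cosets Ps ∧ hdist (S : Set G) R Q < ⊤}.encard ≤ N)) := by
  simp only [hdist_lt_top_iff]
  have h13 : (∀ P ∈ Ps, P.relIndex (Subgroup.Commensurable.commensurator P) ≠ 0) →
      ∃ N : ℕ, 0 < N ∧ ∀ Q ∈ cosets Ps, {R | R ∈ cosets Ps ∧ HdistFinite S R Q}.encard ≤ N :=
    fun h1 => ⟨∑ P ∈ Ps, P.relIndex (Subgroup.Commensurable.commensurator P) + 1,
      Nat.succ_pos _, fun Q _ =>
      (encard_cosets_hdistFinite_le hpair.generates h1 Q).trans (by push_cast; exact le_self_add)⟩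
  have h32 : (∃ N : ℕ, 0 < N ∧ ∀ Q ∈ cosets Ps,
      {R | R ∈ cosets Ps ∧ HdistFinite S R Q}.encard ≤ N) →
      ∀ Q ∈ cosets Ps, {R | R ∈ cosets Ps ∧ HdistFinite S R Q}.Finite :=
    fun ⟨_, _, hN⟩ Q hQ => Set.finite_of_encard_le_coe (hN Q hQ)
  have h21 : (∀ Q ∈ cosets Ps, {R | R ∈ cosets Ps ∧ HdistFinite S R Q}.Finite) →
      ∀ P ∈ Ps, P.relIndex (Subgroup.Commensurable.commensurator P) ≠ 0 :=
    fun h2 P hP => relIndex_commensurator_ne_zero hpair.generates hP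
      (h2 P ⟨1, P, hP, (one_smul G _).symm⟩)
  exact ⟨⟨h32 ∘ h13, h21⟩, ⟨h13, h21 ∘ h32⟩⟩

end CIC
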